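/- arXiv:2304.11248 — 6 statements merged into one kernel-verified Lean document; each statement's English description precedes it below -/
import Mathlib

section
/- Let t : Fin 4 → ℝ be a temporal covector and h a spatial metric compatible with t. Let C : Fin 4 → Fin 4 → Fin 4 → ℝ (written C^a_{bc}) be a connecting field that is symmetric in its lower indices (C^a_{bc} = C^a_{cb} for all a,b,c). Then C is metric-compatible (i.e. t_a C^a_{bc} = 0 for all b,c, and C^b_{an} h^{nc} + C^c_{an} h^{bn} = 0 for all a,b,c) if and only if there exists an antisymmetric matrix κ : Fin 4 → Fin 4 → ℝ (κ_{ab} = −κ_{ba}) such that C^a_{bc} = h^{an}(t_b κ_{cn} + t_c κ_{bn}) for all a,b,c. -/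
/-!
Because the radical of `h` is spanned by `t`, the image of `h` is exactly the annihilator of `t`.
So `t_a C^a_{bc} = 0` lets us lower the index, `C^a_{bc} = h^{am} L_{mbc}` with `L` symmetric in
`b, c`. The metric condition then says that for each `a` the symmetric form
`σ_{mn} = L_{man} + L_{nam}` vanishes on pairs of vectors annihilated by `t`, hence
`σ_{mn} = t_m g_{an} + t_n g_{am}`. Solving for `L` as one solves for Christoffel symbols, the part
of `L` proportional to `t_m` is killed by `h`, and what is left is the claimed form, with `κ` the
antisymmetric part of `g`.
-/

open Matrix

-- With `σ a m n = L m a n + L n a m`, the Christoffel-symbol trick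
-- `2 L m b c = σ b m c + σ c m b - σ m b c`.
theorem eq_of_symm_of_add_swap_eq {ι : Type*} {L : ι → ι → ι → ℝ} {g : ι → ι → ℝ} {t : ι → ℝ}
    (hL : ∀ m b c, L m b c = L m c b)
    (hσ : ∀ a m n, L m a n + L n a m = t m * g a n + t n * g a m) (m b c : ι) :
    L m b c = t m * ((g b c + g c b) / 2) + t b * ((g c m - g m c) / 2)
      + t c * ((g b m - g m b) / 2) := by
  linear_combination (hσ b m c + hσ c m b - hσ m b c + hL m b c - hL c b m - hL b c m) / 2

section

variable {ι : Type*} [Fintype ι]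

theorem Matrix.exists_mulVec_eq_of_dotProduct_eq_zero [DecidableEq ι] {K : Type*} [Field K]
    {h : Matrix ι ι K} {t v : ι → K} (hrad : ∀ ω, ω ᵥ* h = 0 → ∃ k : K, ω = k • t)
    (hv : t ⬝ᵥ v = 0) : ∃ ω, h *ᵥ ω = v := by
  by_contra hne
  have hv' : v ∉ LinearMap.range h.mulVecLin := by simpa using hne
  obtain ⟨f, hfv, hf⟩ := Submodule.exists_dual_map_eq_bot_of_notMem hv' inferInstance
  set ω := (dotProductEquiv K ι).symm f
  have hfω : ∀ x, f x = ω ⬝ᵥ x := fun x => by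
    rw [← dotProductEquiv_apply_apply, LinearEquiv.apply_symm_apply]
  obtain ⟨k, hk⟩ : ∃ k : K, ω = k • t := hrad ω <| dotProduct_eq_zero _ fun x => by
    have hx : f (h *ᵥ x) ∈ (LinearMap.range h.mulVecLin).map f :=
      Submodule.mem_map_of_mem ⟨x, rfl⟩
    rwa [hf, Submodule.mem_bot, hfω, dotProduct_mulVec] at hx
  exact hfv (by rw [hfω, hk, smul_dotProduct, hv, smul_zero])

theorem Matrix.dotProduct_mulVec_eq_zero_of_mul_mul_eq_zero [DecidableEq ι] {K : Type*} [Field K]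
    {h S : Matrix ι ι K} {t x y : ι → K} (hsym : h.IsSymm)
    (hrad : ∀ ω, ω ᵥ* h = 0 → ∃ k : K, ω = k • t) (hS : h * S * h = 0)
    (hx : t ⬝ᵥ x = 0) (hy : t ⬝ᵥ y = 0) : x ⬝ᵥ S *ᵥ y = 0 := by
  obtain ⟨ξ, rfl⟩ := exists_mulVec_eq_of_dotProduct_eq_zero hrad hx
  obtain ⟨η, rfl⟩ := exists_mulVec_eq_of_dotProduct_eq_zero hrad hy
  rw [← vecMul_transpose, hsym.eq, mulVec_mulVec, ← dotProduct_mulVec, mulVec_mulVec,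
    ← Matrix.mul_assoc, hS, zero_mulVec, dotProduct_zero]

theorem Matrix.IsSymm.exists_eq_add_of_dotProduct_mulVec_eq_zero [DecidableEq ι]
    {S : Matrix ι ι ℝ} (hS : S.IsSymm) {t : ι → ℝ}
    (hvan : ∀ x y, t ⬝ᵥ x = 0 → t ⬝ᵥ y = 0 → x ⬝ᵥ S *ᵥ y = 0) :
    ∃ g : ι → ℝ, ∀ m n, S m n = t m * g n + t n * g m := by
  by_cases ht : t = 0
  · refine ⟨0, fun m n => ?_⟩
    simpa [ht, mulVec_single_one] using
      hvan (Pi.single m 1) (Pi.single n 1) (by simp [ht]) (by simp [ht])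
  obtain ⟨i, hi⟩ : ∃ i, t i ≠ 0 := Function.ne_iff.mp ht
  set v : ι → ℝ := Pi.single i (t i)⁻¹
  have hv : t ⬝ᵥ v = 1 := by simp [v, dotProduct_single, hi]
  have hvS : ∀ n, v ⬝ᵥ S.col n = (S *ᵥ v) n := fun n => by
    conv_rhs => rw [← hS.eq, mulVec_transpose]
    rfl
  refine ⟨fun n => (S *ᵥ v) n - t n * (v ⬝ᵥ S *ᵥ v) / 2, fun m n => ?_⟩
  -- `x - (t ⬝ᵥ x) • v` lies in the kernel of `t` for every `x`
  have key := hvan (Pi.single m 1 - t m • v) (Pi.single n 1 - t n • v)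
    (by simp [dotProduct_sub, hv]) (by simp [dotProduct_sub, hv])
  simp only [mulVec_sub, mulVec_smul, sub_dotProduct, dotProduct_sub, smul_dotProduct,
    dotProduct_smul, single_one_dotProduct, mulVec_single_one, hvS, col_apply, smul_eq_mul] at key
  linear_combination key

theorem Matrix.sum_mul_add_mul_eq_zero_iff {R : Type*} [CommRing R] {h : Matrix ι ι R}
    (hsym : h.IsSymm) (Γ : Matrix ι ι R) :
    (∀ b c, ∑ n, (Γ b n * h n c + Γ c n * h b n) = 0) ↔ Γ * h + (Γ * h)ᵀ = 0 := by
  rw [← Matrix.ext_iff]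
  refine forall₂_congr fun b c => ?_
  simp only [add_apply, transpose_apply, mul_apply, zero_apply, Finset.sum_add_distrib,
    hsym.apply b]

theorem exists_symm_index_lowering [DecidableEq ι] {h : Matrix ι ι ℝ} {t : ι → ℝ}
    (hrad : ∀ ω, ω ᵥ* h = 0 → ∃ k : ℝ, ω = k • t) {C : ι → ι → ι → ℝ}
    (hCsym : ∀ a b c, C a b c = C a c b) (htC : ∀ b c, ∑ a, t a * C a b c = 0) :
    ∃ L : ι → ι → ι → ℝ, (∀ m b c, L m b c = L m c b) ∧
      ∀ a b c, C a b c = ∑ m, h a m * L m b c := by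
  choose ω hω using fun b c => exists_mulVec_eq_of_dotProduct_eq_zero hrad (htC b c)
  refine ⟨fun m b c => (ω b c m + ω c b m) / 2, fun _ _ _ => by dsimp only; rw [add_comm],
    fun a b c => ?_⟩
  calc C a b c = (C a b c + C a c b) / 2 := by rw [← hCsym]; ring
    _ = ((h *ᵥ ω b c) a + (h *ᵥ ω c b) a) / 2 := by rw [hω, hω]
    _ = ∑ m, h a m * ((ω b c m + ω c b m) / 2) := by
      simp only [mulVec, dotProduct, ← Finset.sum_add_distrib, Finset.sum_div]
      exact Finset.sum_congr rfl fun m _ => by ring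

theorem exists_antisymm_of_metric_compatible [DecidableEq ι] {h : Matrix ι ι ℝ} {t : ι → ℝ}
    (hsym : h.IsSymm) (horth : h *ᵥ t = 0) (hrad : ∀ ω, ω ᵥ* h = 0 → ∃ k : ℝ, ω = k • t)
    {C : ι → ι → ι → ℝ} (hCsym : ∀ a b c, C a b c = C a c b)
    (htC : ∀ b c, ∑ a, t a * C a b c = 0)
    (hhC : ∀ a b c, ∑ n, (C b a n * h n c + C c a n * h b n) = 0) :
    ∃ κ : ι → ι → ℝ, (∀ a b, κ a b = -κ b a) ∧
      ∀ a b c, C a b c = ∑ n, h a n * (t b * κ c n + t c * κ b n) := by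
  obtain ⟨L, hLsym, hCL⟩ := exists_symm_index_lowering hrad hCsym htC
  have hσ (a : ι) : ∃ g : ι → ℝ, ∀ m n, L m a n + L n a m = t m * g n + t n * g m := by
    let Λ : Matrix ι ι ℝ := of fun m n => L m a n
    have hΓ : (of fun b n => C b a n) = h * Λ := by
      ext b n
      exact hCL b a n
    have hΛ : h * (Λ + Λᵀ) * h = 0 := by
      rw [← (sum_mul_add_mul_eq_zero_iff hsym (of fun b n => C b a n)).1 (hhC a), hΓ]
      simp only [Matrix.mul_add, Matrix.add_mul, transpose_mul, hsym.eq, Matrix.mul_assoc]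
    exact IsSymm.exists_eq_add_of_dotProduct_mulVec_eq_zero (IsSymm.ext fun _ _ => add_comm _ _)
      fun x y hx hy => dotProduct_mulVec_eq_zero_of_mul_mul_eq_zero hsym hrad hΛ hx hy
  choose g hg using hσ
  refine ⟨fun x y => (g x y - g y x) / 2, fun _ _ => by ring, fun a b c => ?_⟩
  calc C a b c = ∑ m, h a m * L m b c := hCL a b c
    _ = (∑ m, h a m * t m) * ((g b c + g c b) / 2)
        + ∑ m, h a m * (t b * ((g c m - g m c) / 2) + t c * ((g b m - g m b) / 2)) := by
      rw [Finset.sum_mul, ← Finset.sum_add_distrib]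
      refine Finset.sum_congr rfl fun m _ => ?_
      rw [eq_of_symm_of_add_swap_eq hLsym hg m b c]
      ring
    _ = _ := by rw [show (∑ m, h a m * t m) = 0 from congrFun horth a, zero_mul, zero_add]

theorem metric_compatible_of_eq_antisymm {h : Matrix ι ι ℝ} {t : ι → ℝ}
    (hsym : h.IsSymm) (horth : h *ᵥ t = 0) {κ : Matrix ι ι ℝ} (hκ : ∀ a b, κ a b = -κ b a)
    {C : ι → ι → ι → ℝ} (hC : ∀ a b c, C a b c = ∑ n, h a n * (t b * κ c n + t c * κ b n)) :
    (∀ b c, ∑ a, t a * C a b c = 0) ∧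
      ∀ a b c, ∑ n, (C b a n * h n c + C c a n * h b n) = 0 := by
  have htv : t ᵥ* h = 0 := by rw [← mulVec_transpose, hsym.eq, horth]
  constructor
  · intro b c
    have hC' : (fun a => C a b c) = h *ᵥ fun n => t b * κ c n + t c * κ b n :=
      funext fun a => hC a b c
    change t ⬝ᵥ (fun a => C a b c) = 0
    rw [hC', dotProduct_mulVec, htv, zero_dotProduct]
  · intro a
    have hΓ : (of fun b n => C b a n) = h * (t a • κᵀ + vecMulVec (κ a) t) := by
      ext b n
      simp only [of_apply, hC, mul_apply, Matrix.add_apply, Matrix.smul_apply, transpose_apply,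
        vecMulVec_apply, smul_eq_mul]
      exact Finset.sum_congr rfl fun m _ => by ring
    have hκT : κᵀ = -κ := by
      ext a b
      exact hκ b a
    refine (sum_mul_add_mul_eq_zero_iff hsym (of fun b n => C b a n)).2 ?_
    rw [hΓ, Matrix.mul_add, Matrix.add_mul, mul_vecMulVec, vecMulVec_mul, htv]
    simp [transpose_mul, hsym.eq, hκT, Matrix.mul_assoc]

end

theorem connecting_field_compatible_iff_symmetric_general
    (t : Fin 4 → ℝ)
    (h : Fin 4 → Fin 4 → ℝ)
    (hsym : ∀ a b, h a b = h b a)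
    (horth : ∀ a, ∑ b, h a b * t b = 0)
    (hrad : ∀ ω : Fin 4 → ℝ, (∀ b, ∑ a, ω a * h a b = 0) ↔ ∃ k : ℝ, ω = k • t)
    (C : Fin 4 → Fin 4 → Fin 4 → ℝ)
    (hCsym : ∀ a b c, C a b c = C a c b) :
    ((∀ b c, ∑ a, t a * C a b c = 0) ∧
      (∀ a b c, ∑ n, (C b a n * h n c + C c a n * h b n) = 0))
    ↔ ∃ κ : Fin 4 → Fin 4 → ℝ, (∀ a b, κ a b = - κ b a) ∧
        (∀ a b c, C a b c = ∑ n, h a n * (t b * κ c n + t c * κ b n)) := by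
  have hsym' : IsSymm (of h) := IsSymm.ext fun a b => hsym b a
  have horth' : of h *ᵥ t = 0 := funext horth
  have hrad' : ∀ ω, ω ᵥ* of h = 0 → ∃ k : ℝ, ω = k • t :=
    fun ω hω => (hrad ω).1 (congrFun hω)
  constructor
  · rintro ⟨htC, hhC⟩
    exact exists_antisymm_of_metric_compatible hsym' horth' hrad' hCsym htC hhC
  · rintro ⟨κ, hκ, hC⟩
    exact metric_compatible_of_eq_antisymm hsym' horth' hκ hC

/-- For a connecting field `C^a_{bc}` symmetric in its lower indices,
metric compatibility with a temporal covector `t` and spatial metric `h` holds iff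
`C^a_{bc} = h^{an}(t_b κ_{cn} + t_c κ_{bn})` for some antisymmetric `κ`. -/
theorem connecting_field_compatible_iff_symmetric
    (t : Fin 4 → ℝ) (ht : t ≠ 0)
    (h : Fin 4 → Fin 4 → ℝ)
    (hsym : ∀ a b, h a b = h b a)
    (hpsd : ∀ ω : Fin 4 → ℝ, 0 ≤ ∑ a, ∑ b, ω a * h a b * ω b)
    (horth : ∀ a, ∑ b, h a b * t b = 0)
    (hrad : ∀ ω : Fin 4 → ℝ, (∀ b, ∑ a, ω a * h a b = 0) ↔ ∃ k : ℝ, ω = k • t)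
    (C : Fin 4 → Fin 4 → Fin 4 → ℝ)
    (hCsym : ∀ a b c, C a b c = C a c b) :
    ((∀ b c, ∑ a, t a * C a b c = 0) ∧
      (∀ a b c, ∑ n, (C b a n * h n c + C c a n * h b n) = 0))
    ↔ ∃ κ : Fin 4 → Fin 4 → ℝ, (∀ a b, κ a b = - κ b a) ∧
        (∀ a b c, C a b c = ∑ n, h a n * (t b * κ c n + t c * κ b n)) :=
  connecting_field_compatible_iff_symmetric_general t h hsym horth hrad C hCsym
end

section
/- Let t : Fin 4 → ℝ be a temporal covector and h a spatial metric compatible with t. Let C : Fin 4 → Fin 4 → Fin 4 → ℝ (written C^a_{bc}) be a connecting field, not assumed symmetric in its lower indices. Then C is metric-compatible (i.e. t_a C^a_{bc} = 0 for all b,c, and C^b_{an} h^{nc} + C^c_{an} h^{bn} = 0 for all a,b,c) if and only if there exists an array κ : Fin 4 → Fin 4 → Fin 4 → ℝ (written κ_{rbc}) such that C^a_{bc} = h^{ar}(κ_{rbc} − κ_{cbr}) for all a,b,c. -/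
/-!
Fix the first lower index `b` and read `C^a_{bc}` as a matrix `M` in `a, c`. Since the left kernel
of `h` is spanned by `t`, the range of `h` is the annihilator of `t`, so the first condition says
exactly that `M = h B` for some matrix `B`. The second condition then becomes `h (B + Bᵀ) h = 0`:
the symmetric form `B + Bᵀ` vanishes on the annihilator of `t`, hence equals `t ⊗ φ + φ ⊗ t`.
Replacing `B` by `B - t ⊗ φ` does not change `h B` (as `h t = 0`) and makes `B` antisymmetric,
and `κ_{rbc} = B_{rc} / 2` is the required array.
-/

open Matrix

variable {K m n : Type*} [Field K] [Fintype m] [Fintype n]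

namespace Matrix

section

variable [DecidableEq m]

theorem mem_range_mulVecLin_iff (H : Matrix m n K) (u : m → K) :
    u ∈ LinearMap.range H.mulVecLin ↔ ∀ ω, ω ᵥ* H = 0 → ω ⬝ᵥ u = 0 := by
  rw [← Subspace.dualAnnihilator_dualCoannihilator_eq (W := LinearMap.range H.mulVecLin),
    Submodule.mem_dualCoannihilator]
  refine ((dotProductEquiv K m).toEquiv.forall_congr fun ω => ?_).symm
  simp [Submodule.mem_dualAnnihilator, dotProduct_mulVec, dotProduct_eq_zero_iff]

theorem mem_range_mulVecLin_iff_dotProduct_eq_zero {H : Matrix m n K} {t : m → K}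
    (hker : ∀ ω, ω ᵥ* H = 0 ↔ ∃ k : K, ω = k • t) (u : m → K) :
    u ∈ LinearMap.range H.mulVecLin ↔ t ⬝ᵥ u = 0 := by
  simp only [mem_range_mulVecLin_iff, hker]
  refine ⟨fun hu => hu t ⟨1, (one_smul K t).symm⟩, ?_⟩
  rintro hu ω ⟨k, rfl⟩
  rw [smul_dotProduct, hu, smul_zero]

theorem exists_mul_eq_of_vecMul_eq_zero {p : Type*} {H : Matrix m n K} {t : m → K}
    (hker : ∀ ω, ω ᵥ* H = 0 ↔ ∃ k : K, ω = k • t) {M : Matrix m p K} (hM : t ᵥ* M = 0) :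
    ∃ B : Matrix n p K, H * B = M := by
  have hcol : ∀ j, (fun i => M i j) ∈ LinearMap.range H.mulVecLin := fun j =>
    (mem_range_mulVecLin_iff_dotProduct_eq_zero hker _).2 (congrFun hM j)
  choose x hx using hcol
  exact ⟨(of x)ᵀ, ext fun i j => congrFun (hx j) i⟩

theorem exists_eq_vecMulVec_add_vecMulVec [NeZero (2 : K)] {S : Matrix m m K} (hS : S.IsSymm)
    {t : m → K} (hvan : ∀ v w, t ⬝ᵥ v = 0 → t ⬝ᵥ w = 0 → v ⬝ᵥ S *ᵥ w = 0) :
    ∃ φ : m → K, S = vecMulVec t φ + vecMulVec φ t := by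
  by_cases ht : t = 0
  · subst ht
    refine ⟨0, ext fun r n => ?_⟩
    simpa using hvan (Pi.single r 1) (Pi.single n 1)
  obtain ⟨i, hi⟩ := Function.ne_iff.mp ht
  set x : m → K := Pi.single i (t i)⁻¹
  have htx : t ⬝ᵥ x = 1 := by simpa [x] using mul_inv_cancel₀ hi
  refine ⟨S *ᵥ x - ((x ⬝ᵥ S *ᵥ x) / 2) • t, ext fun r n => ?_⟩
  -- `v ↦ v - (t ⬝ᵥ v) • x` projects onto the annihilator of `t`; evaluate `S` on the
  -- projections of two basis vectors.
  have hproj := hvan (Pi.single r 1 - t r • x) (Pi.single n 1 - t n • x)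
    (by simp [dotProduct_sub, htx]) (by simp [dotProduct_sub, htx])
  have hright : ∀ v n, v ⬝ᵥ S *ᵥ Pi.single n 1 = (S *ᵥ v) n := fun v n => by
    rw [dotProduct_mulVec, ← vecMul_transpose, hS.eq, dotProduct_single_one]
  simp only [sub_dotProduct, smul_dotProduct, mulVec_sub, mulVec_smul, dotProduct_sub,
    dotProduct_smul, hright, single_one_dotProduct, smul_eq_mul] at hproj
  simp only [Pi.sub_apply, Pi.smul_apply, mulVec_single_one, col_apply, hS.apply,
    smul_eq_mul] at hproj
  simp only [add_apply, vecMulVec_apply, Pi.sub_apply, Pi.smul_apply, smul_eq_mul]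
  linear_combination hproj + t r * t n * add_halves (x ⬝ᵥ S *ᵥ x)

theorem vecMul_eq_zero_and_mul_add_mul_transpose_eq_zero_iff [NeZero (2 : K)]
    {H : Matrix m m K} (hH : H.IsSymm) {t : m → K}
    (hker : ∀ ω, ω ᵥ* H = 0 ↔ ∃ k : K, ω = k • t) (M : Matrix m m K) :
    t ᵥ* M = 0 ∧ M * H + H * Mᵀ = 0 ↔ ∃ A : Matrix m m K, Aᵀ = -A ∧ M = H * A := by
  have htH : t ᵥ* H = 0 := (hker t).2 ⟨1, (one_smul K t).symm⟩
  constructor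
  · rintro ⟨hM, hMH⟩
    obtain ⟨B, rfl⟩ := exists_mul_eq_of_vecMul_eq_zero hker hM
    have hHSH : H * (B + Bᵀ) * H = 0 := by
      rw [transpose_mul, hH.eq] at hMH
      simpa only [Matrix.mul_add, Matrix.add_mul, Matrix.mul_assoc] using hMH
    obtain ⟨φ, hφ⟩ := exists_eq_vecMulVec_add_vecMulVec (isSymm_add_transpose_self B)
      fun v w hv hw => by
        obtain ⟨x, rfl⟩ := (mem_range_mulVecLin_iff_dotProduct_eq_zero hker v).2 hv
        obtain ⟨y, rfl⟩ := (mem_range_mulVecLin_iff_dotProduct_eq_zero hker w).2 hw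
        rw [mulVecLin_apply, mulVecLin_apply, mulVec_mulVec, dotProduct_mulVec,
          ← vecMul_transpose, hH.eq, vecMul_vecMul, ← Matrix.mul_assoc, hHSH, vecMul_zero,
          zero_dotProduct]
    refine ⟨B - vecMulVec t φ, ?_, ?_⟩
    · rw [transpose_sub, transpose_vecMulVec, eq_sub_of_add_eq' hφ.symm]
      abel
    · rw [Matrix.mul_sub, mul_vecMulVec, ← vecMul_transpose, hH.eq, htH, zero_vecMulVec,
        sub_zero]
  · rintro ⟨A, hA, rfl⟩
    refine ⟨by rw [← vecMul_vecMul, htH, zero_vecMul], ?_⟩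
    rw [transpose_mul, hA, hH.eq, Matrix.neg_mul, Matrix.mul_neg, ← Matrix.mul_assoc,
      add_neg_cancel]

end

end Matrix

def midSlice {α ι : Type*} (C : ι → ι → ι → α) (b : ι) : Matrix ι ι α := of fun a c => C a b c

theorem exists_eq_sum_mul_sub_iff_midSlice [NeZero (2 : K)] (H : Matrix m m K)
    (C : m → m → m → K) :
    (∃ κ : m → m → m → K, ∀ a b c, C a b c = ∑ r, H a r * (κ r b c - κ c b r)) ↔
      ∀ b, ∃ A : Matrix m m K, Aᵀ = -A ∧ midSlice C b = H * A := by
  constructor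
  · rintro ⟨κ, hκ⟩ b
    exact ⟨of fun r c => κ r b c - κ c b r, ext fun r c => by simp,
      ext fun a c => by simp [midSlice, hκ, mul_apply]⟩
  · intro hA
    choose A hskew hC using hA
    refine ⟨fun r b c => A b r c / 2, fun a b c => ?_⟩
    have hAbc : ∀ r, A b r c / 2 - A b c r / 2 = A b r c := fun r => by
      rw [← transpose_apply (A b) r c, hskew, neg_apply, neg_div, sub_neg_eq_add, add_halves]
    simpa [hAbc, midSlice, mul_apply] using congrFun (congrFun (hC b) a) c

theorem connecting_field_compatible_iff_torsional_general
    (t : Fin 4 → ℝ)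
    (h : Fin 4 → Fin 4 → ℝ)
    (hsym : ∀ a b, h a b = h b a)
    (hrad : ∀ ω : Fin 4 → ℝ, (∀ b, ∑ a, ω a * h a b = 0) ↔ ∃ k : ℝ, ω = k • t)
    (C : Fin 4 → Fin 4 → Fin 4 → ℝ) :
    ((∀ b c, ∑ a, t a * C a b c = 0) ∧
      (∀ a b c, ∑ n, (C b a n * h n c + C c a n * h b n) = 0))
    ↔ ∃ κ : Fin 4 → Fin 4 → Fin 4 → ℝ,
        (∀ a b c, C a b c = ∑ r, h a r * (κ r b c - κ c b r)) := by
  have hH : (of h).IsSymm := IsSymm.ext fun a b => hsym b a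
  have hker : ∀ ω, ω ᵥ* of h = 0 ↔ ∃ k : ℝ, ω = k • t := fun ω => by
    simpa only [funext_iff, vecMul, dotProduct, of_apply, Pi.zero_apply] using hrad ω
  have htime : (∀ b c, ∑ a, t a * C a b c = 0) ↔ ∀ b, t ᵥ* midSlice C b = 0 := by
    simp only [funext_iff, vecMul, dotProduct, midSlice, of_apply, Pi.zero_apply]
  have hspace : (∀ a b c, ∑ n, (C b a n * h n c + C c a n * h b n) = 0) ↔
      ∀ a, midSlice C a * of h + of h * (midSlice C a)ᵀ = 0 := by
    simp only [← Matrix.ext_iff, midSlice, Matrix.add_apply, Matrix.mul_apply, transpose_apply,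
      of_apply, Matrix.zero_apply, Finset.sum_add_distrib, mul_comm (h _ _)]
  rw [htime, hspace, ← forall_and,
    forall_congr' fun b => vecMul_eq_zero_and_mul_add_mul_transpose_eq_zero_iff hH hker _]
  exact (exists_eq_sum_mul_sub_iff_midSlice (of h) C).symm

/-- For a connecting field `C^a_{bc}` (not assumed symmetric in its lower
indices), metric compatibility with a temporal covector `t` and spatial metric `h` holds
iff `C^a_{bc} = h^{ar}(κ_{rbc} − κ_{cbr})` for some array `κ`. -/
theorem connecting_field_compatible_iff_torsional
    (t : Fin 4 → ℝ) (ht : t ≠ 0)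
    (h : Fin 4 → Fin 4 → ℝ)
    (hsym : ∀ a b, h a b = h b a)
    (hpsd : ∀ ω : Fin 4 → ℝ, 0 ≤ ∑ a, ∑ b, ω a * h a b * ω b)
    (horth : ∀ a, ∑ b, h a b * t b = 0)
    (hrad : ∀ ω : Fin 4 → ℝ, (∀ b, ∑ a, ω a * h a b = 0) ↔ ∃ k : ℝ, ω = k • t)
    (C : Fin 4 → Fin 4 → Fin 4 → ℝ) :
    ((∀ b c, ∑ a, t a * C a b c = 0) ∧
      (∀ a b c, ∑ n, (C b a n * h n c + C c a n * h b n) = 0))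
    ↔ ∃ κ : Fin 4 → Fin 4 → Fin 4 → ℝ,
        (∀ a b c, C a b c = ∑ r, h a r * (κ r b c - κ c b r)) :=
  connecting_field_compatible_iff_torsional_general t h hsym hrad C
end

section
/- Let Γ be a connection on an open set U ⊆ ℝ⁴ with torsion T^c_{ab} = Γ^c_{ba} − Γ^c_{ab}, and let t : U → (Fin 4 → ℝ) be a differentiable covector field compatible with Γ, i.e. ∂_a t_b − Γ^n_{ab} t_n = 0 on U. Then (i) ∂_a t_b − ∂_b t_a = −T^n_{ab} t_n at every point of U; hence t is closed if and only if T^n_{ab} t_n = 0 for all a,b. (ii) In particular, if the torsion has the spacelike form T^a_{bc} = F^a_b t_c − F^a_c t_b for some field F^a_b satisfying t_a F^a_b = 0, then compatibility ∇_a t_b = 0 implies t is closed. Thus a connection with nonvanishing torsion can be compatible with a closed temporal metric. -/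
/-- The coordinate partial derivative on ℝ⁴ in the `i`-th direction. -/
noncomputable def pd (i : Fin 4) (f : (Fin 4 → ℝ) → ℝ) (p : Fin 4 → ℝ) : ℝ :=
  fderiv ℝ f p (Pi.single i 1)

/-! Compatibility says `∂_a t_b = Γ^n_{ab} t_n`, so antisymmetrizing leaves only the torsion
contracted with `t`. For spacelike torsion that contraction is
`t_b (t_n F^n_a) − t_a (t_n F^n_b)`, which vanishes because `t_n F^n_b = 0`. -/

open Finset

section Torsion

variable {ι R : Type*} [Fintype ι] [CommRing R]

def torsion (Γ : ι → ι → ι → R) (c a b : ι) : R := Γ c b a - Γ c a b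

variable {Γ : ι → ι → ι → R} {t : ι → R}

/-- `D a b` stands for `∂_a t_b` at a point, so `h` says `∇_a t_b = 0` there. -/
theorem antisymm_eq_neg_torsion_contract {D : ι → ι → R}
    (h : ∀ a b, D a b - ∑ n, Γ n a b * t n = 0) (a b : ι) :
    D a b - D b a = -∑ n, torsion Γ n a b * t n := by
  rw [sub_eq_zero.mp (h a b), sub_eq_zero.mp (h b a)]
  simp only [torsion, sub_mul, sum_sub_distrib, neg_sub]

theorem antisymm_eq_zero_iff_torsion_contract_eq_zero {D : ι → ι → R}
    (h : ∀ a b, D a b - ∑ n, Γ n a b * t n = 0) :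
    (∀ a b, D a b - D b a = 0) ↔ ∀ a b, ∑ n, torsion Γ n a b * t n = 0 := by
  simp only [antisymm_eq_neg_torsion_contract h, neg_eq_zero]

theorem torsion_contract_eq_zero_of_spacelike {F : ι → ι → R}
    (hT : ∀ a b c, torsion Γ a b c = F a b * t c - F a c * t b)
    (hF : ∀ b, ∑ a, t a * F a b = 0) (a b : ι) :
    ∑ n, torsion Γ n a b * t n = 0 :=
  calc ∑ n, torsion Γ n a b * t n
      = t b * ∑ n, t n * F n a - t a * ∑ n, t n * F n b := by
        simp only [hT, mul_sum, ← sum_sub_distrib]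
        exact sum_congr rfl fun n _ => by ring
    _ = 0 := by rw [hF a, hF b, mul_zero, mul_zero, sub_zero]

end Torsion

theorem compatible_covector_with_torsion_general
    (U : Set (Fin 4 → ℝ))
    (Γ : (Fin 4 → ℝ) → Fin 4 → Fin 4 → Fin 4 → ℝ)
    (t : (Fin 4 → ℝ) → Fin 4 → ℝ)
    (hcompat : ∀ p ∈ U, ∀ a b,
      pd a (fun q => t q b) p - ∑ n, Γ p n a b * t p n = 0) :
    (∀ p ∈ U, ∀ a b,
        pd a (fun q => t q b) p - pd b (fun q => t q a) p
          = -∑ n, (Γ p n b a - Γ p n a b) * t p n)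
    ∧ (∀ p ∈ U,
        ((∀ a b, pd a (fun q => t q b) p - pd b (fun q => t q a) p = 0)
          ↔ (∀ a b, ∑ n, (Γ p n b a - Γ p n a b) * t p n = 0)))
    ∧ (∀ F : (Fin 4 → ℝ) → Fin 4 → Fin 4 → ℝ,
        (∀ p ∈ U, ∀ a b c,
          Γ p a c b - Γ p a b c = F p a b * t p c - F p a c * t p b) →
        (∀ p ∈ U, ∀ b, ∑ a, t p a * F p a b = 0) →
        ∀ p ∈ U, ∀ a b,
          pd a (fun q => t q b) p - pd b (fun q => t q a) p = 0) :=
  ⟨fun p hp => antisymm_eq_neg_torsion_contract (hcompat p hp),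
    fun p hp => antisymm_eq_zero_iff_torsion_contract_eq_zero (hcompat p hp),
    fun _ hT hF p hp =>
      (antisymm_eq_zero_iff_torsion_contract_eq_zero (hcompat p hp)).mpr
        (torsion_contract_eq_zero_of_spacelike (hT p hp) (hF p hp))⟩

/-- if a connection `Γ` with torsion `T^c_{ab} = Γ^c_{ba} − Γ^c_{ab}` is
compatible with a differentiable covector field `t` on `U`, then
(i) `∂_a t_b − ∂_b t_a = −T^n_{ab} t_n`, hence `t` is closed iff `T^n_{ab} t_n = 0`;
(ii) if the torsion has the spacelike form `T^a_{bc} = F^a_b t_c − F^a_c t_b` with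
`t_a F^a_b = 0`, then `t` is closed. -/
theorem compatible_covector_with_torsion
    (U : Set (Fin 4 → ℝ)) (hU : IsOpen U)
    (Γ : (Fin 4 → ℝ) → Fin 4 → Fin 4 → Fin 4 → ℝ)
    (t : (Fin 4 → ℝ) → Fin 4 → ℝ)
    (ht : ∀ b, DifferentiableOn ℝ (fun p => t p b) U)
    (hcompat : ∀ p ∈ U, ∀ a b,
      pd a (fun q => t q b) p - ∑ n, Γ p n a b * t p n = 0) :
    (∀ p ∈ U, ∀ a b,
        pd a (fun q => t q b) p - pd b (fun q => t q a) p
          = -∑ n, (Γ p n b a - Γ p n a b) * t p n)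
    ∧ (∀ p ∈ U,
        ((∀ a b, pd a (fun q => t q b) p - pd b (fun q => t q a) p = 0)
          ↔ (∀ a b, ∑ n, (Γ p n b a - Γ p n a b) * t p n = 0)))
    ∧ (∀ F : (Fin 4 → ℝ) → Fin 4 → Fin 4 → ℝ,
        (∀ p ∈ U, ∀ a b c,
          Γ p a c b - Γ p a b c = F p a b * t p c - F p a c * t p b) →
        (∀ p ∈ U, ∀ b, ∑ a, t p a * F p a b = 0) →
        ∀ p ∈ U, ∀ a b,
          pd a (fun q => t q b) p - pd b (fun q => t q a) p = 0) :=
  compatible_covector_with_torsion_general U Γ t hcompat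
end

section
/- Let t ∈ (ℝ⁴)* be a constant covector, x ∈ ℝ⁴ a constant vector with t_a x^a = 0, and ψ : U → ℝ a twice continuously differentiable function on an open set U ⊆ ℝ⁴. Define the connection on U with Christoffel symbols Γ^a_{bc} = −x^a (∂_b ψ) t_c (i.e. ∇ = (∂, C) with connecting field C^a_{bc} = x^a (∂_b ψ) t_c relative to the flat coordinate connection). Then the Riemann curvature tensor of this connection vanishes identically on U: R^a_{bcd} = ∂_d Γ^a_{cb} − ∂_c Γ^a_{db} + Γ^a_{dm} Γ^m_{cb} − Γ^a_{cm} Γ^m_{db} = 0 for all indices at every point of U. That is, the connection is flat despite having (in general) nonvanishing torsion. -/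
lemma pd_const_mul (i : Fin 4) (k : ℝ) (g : (Fin 4 → ℝ) → ℝ) (p : Fin 4 → ℝ) :
    pd i (fun q => k * g q) p = k * pd i g p := by
  change fderiv ℝ (k • g) p _ = _
  rw [fderiv_const_smul_field]
  rfl

lemma pd_pd_eq_fderiv_fderiv {ψ : (Fin 4 → ℝ) → ℝ} {p : Fin 4 → ℝ}
    (h : DifferentiableAt ℝ (fderiv ℝ ψ) p) (i j : Fin 4) :
    pd i (pd j ψ) p = fderiv ℝ (fderiv ℝ ψ) p (Pi.single i 1) (Pi.single j 1) := by
  unfold pd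
  rw [fderiv_clm_apply h (differentiableAt_const _)]
  simp

lemma pd_pd_comm {ψ : (Fin 4 → ℝ) → ℝ} {p : Fin 4 → ℝ} (h : ContDiffAt ℝ 2 ψ p) (i j : Fin 4) :
    pd i (pd j ψ) p = pd j (pd i ψ) p := by
  have hdiff : DifferentiableAt ℝ (fderiv ℝ ψ) p :=
    (h.fderiv_right (m := 1) le_rfl).differentiableAt one_ne_zero
  rw [pd_pd_eq_fderiv_fderiv hdiff, pd_pd_eq_fderiv_fderiv hdiff,
    (h.isSymmSndFDerivAt (by simp)).eq]

/-- the connection with Christoffel symbols `Γ^a_{bc} = −x^a (∂_b ψ) t_c`,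
for a constant covector `t`, a constant vector `x` with `t_a x^a = 0`, and a C² scalar
field `ψ`, is flat: its Riemann tensor vanishes identically on `U`. -/
theorem torsional_connection_is_flat
    (U : Set (Fin 4 → ℝ)) (hU : IsOpen U)
    (t : Fin 4 → ℝ) (x : Fin 4 → ℝ)
    (htx : ∑ a, t a * x a = 0)
    (ψ : (Fin 4 → ℝ) → ℝ) (hψ : ContDiffOn ℝ 2 ψ U)
    (Γ : (Fin 4 → ℝ) → Fin 4 → Fin 4 → Fin 4 → ℝ)
    (hΓ : ∀ p a b c, Γ p a b c = -(x a * pd b ψ p * t c)) :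
    ∀ p ∈ U, ∀ a b c d,
      pd d (fun q => Γ q a c b) p - pd c (fun q => Γ q a d b) p
        + ∑ m, (Γ p a d m * Γ p m c b - Γ p a c m * Γ p m d b) = 0 := by
  intro p hp a b c d
  have hΓ_deriv : ∀ e f, pd e (fun q => Γ q a f b) p = -(x a * t b) * pd e (pd f ψ) p := by
    intro e f
    have hΓ_slice : (fun q => Γ q a f b) = fun q => -(x a * t b) * pd f ψ q :=
      funext fun q => by rw [hΓ]; ring
    rw [hΓ_slice, pd_const_mul]
  have hΓ_quad : ∀ e f, ∑ m, Γ p a e m * Γ p m f b = 0 := by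
    intro e f
    calc ∑ m, Γ p a e m * Γ p m f b
        = (x a * pd e ψ p) * (pd f ψ p * t b) * ∑ m, t m * x m := by
          rw [Finset.mul_sum]
          exact Finset.sum_congr rfl fun m _ => by rw [hΓ, hΓ]; ring
      _ = 0 := by rw [htx, mul_zero]
  rw [Finset.sum_sub_distrib, hΓ_quad, hΓ_quad, hΓ_deriv, hΓ_deriv,
    pd_pd_comm (hψ.contDiffAt (hU.mem_nhds hp))]
  ring
end

section
/- Let t ∈ (ℝ⁴)* be a constant covector, and let φ : U → ℝ⁴ be a continuously differentiable vector field on an open set U ⊆ ℝ⁴ with t_a φ^a = 0 on U. Define F^a_b = φ^a t_b. Then: (i) δ^n_a ∂_{[n} F^a_{b]} = (1/2) t_b ∂_a φ^a at every point of U, where ∂ is the coordinate (flat, torsion-free) covariant derivative; and hence (ii) for a scalar field ρ : U → ℝ, the pair consisting of the flat coordinate connection and F satisfies the field equation δ^n_a ∂_{[n} F^a_{b]} = 2πρ t_b on U if and only if φ satisfies Poisson's equation ∂_a φ^a = 4πρ on U. Moreover the torsion of the required connection, T^a_{bc} = F^a_b t_c − F^a_c t_b = φ^a (t_b t_c − t_c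 t_b), vanishes identically. Thus standard Newtonian gravitation is recovered as the torsion-free special case of the field equation. -/
open Filter Topology

lemma pd_mul_const (f : (Fin 4 → ℝ) → ℝ) (p : Fin 4 → ℝ)
    (i : Fin 4) (c : ℝ) : pd i (fun q => f q * c) p = pd i f p * c := by
  have hsmul : (fun q => f q * c) = c • f := funext fun q => mul_comm (f q) c
  rw [pd, hsmul, fderiv_const_smul_field]
  exact mul_comm _ _

lemma pd_sum {ι : Type*} {s : Finset ι} {f : ι → (Fin 4 → ℝ) → ℝ} {p : Fin 4 → ℝ}
    (hf : ∀ n ∈ s, DifferentiableAt ℝ (f n) p) (i : Fin 4) :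
    pd i (fun q => ∑ n ∈ s, f n q) p = ∑ n ∈ s, pd i (f n) p := by
  simp [pd, fderiv_fun_sum hf]

lemma pd_eq_zero_of_eventuallyEq_zero {f : (Fin 4 → ℝ) → ℝ} {p : Fin 4 → ℝ}
    (hf : f =ᶠ[𝓝 p] fun _ => 0) (i : Fin 4) : pd i f p = 0 := by
  simp [pd, hf.fderiv_eq]

lemma forall_mul_left_eq_iff {ι M₀ : Type*} [MonoidWithZero M₀] [IsLeftCancelMulZero M₀]
    {t : ι → M₀} (ht : t ≠ 0) {x y : M₀} : (∀ b, t b * x = t b * y) ↔ x = y := by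
  obtain ⟨b, hb⟩ := Function.ne_iff.mp ht
  exact ⟨fun h => mul_left_cancel₀ hb (h b), fun h _ => h ▸ rfl⟩

section Newtonian

variable {U : Set (Fin 4 → ℝ)} {t : Fin 4 → ℝ} {φ : (Fin 4 → ℝ) → Fin 4 → ℝ} {p : Fin 4 → ℝ}

lemma sum_pd_mul_eq_zero_of_orthogonal (hU : IsOpen U) (hp : p ∈ U)
    (hφ : ∀ a, DifferentiableAt ℝ (fun q => φ q a) p)
    (hφt : ∀ q ∈ U, ∑ a, t a * φ q a = 0) (b : Fin 4) :
    ∑ n, pd b (fun q => φ q n * t n) p = 0 := by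
  have hzero : (fun q => ∑ n, φ q n * t n) =ᶠ[𝓝 p] fun _ => 0 := by
    filter_upwards [hU.mem_nhds hp] with q hq
    simpa only [mul_comm] using hφt q hq
  rw [← pd_sum fun n _ => (hφ n).mul_const (t n)]
  exact pd_eq_zero_of_eventuallyEq_zero hzero b

lemma contracted_antisymm_pd_eq_half_mul_divergence (hU : IsOpen U) (hp : p ∈ U)
    (hφ : ∀ a, DifferentiableAt ℝ (fun q => φ q a) p)
    (hφt : ∀ q ∈ U, ∑ a, t a * φ q a = 0) (b : Fin 4) :
    (1 / 2) * ((∑ n, pd n (fun q => φ q n * t b) p) - (∑ n, pd b (fun q => φ q n * t n) p))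
      = (1 / 2) * t b * ∑ a, pd a (fun q => φ q a) p := by
  rw [sum_pd_mul_eq_zero_of_orthogonal hU hp hφ hφt b]
  simp only [pd_mul_const, ← Finset.sum_mul]
  ring

end Newtonian

/-- with `F^a_b = φ^a t_b` for a constant covector `t` and a C¹ field `φ`
with `t_a φ^a = 0` on `U`: (i) `δ^n_a ∂_{[n} F^a_{b]} = (1/2) t_b ∂_a φ^a`;
(ii) the flat coordinate connection and `F` satisfy the field equation
`δ^n_a ∂_{[n} F^a_{b]} = 2πρ t_b` iff `φ` satisfies Poisson's equation `∂_a φ^a = 4πρ`;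
moreover the torsion `F^a_b t_c − F^a_c t_b` vanishes identically. -/
theorem newtonian_gravitation_as_torsion_free_case
    (U : Set (Fin 4 → ℝ)) (hU : IsOpen U)
    (t : Fin 4 → ℝ) (ht : t ≠ 0)
    (φ : (Fin 4 → ℝ) → Fin 4 → ℝ)
    (hφ : ∀ a, ContDiffOn ℝ 1 (fun p => φ p a) U)
    (hφt : ∀ p ∈ U, ∑ a, t a * φ p a = 0)
    (F : (Fin 4 → ℝ) → Fin 4 → Fin 4 → ℝ)
    (hF : ∀ p a b, F p a b = φ p a * t b) :
    (∀ p ∈ U, ∀ b,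
        (1 / 2) * ((∑ n, pd n (fun q => F q n b) p) - (∑ n, pd b (fun q => F q n n) p))
          = (1 / 2) * t b * ∑ a, pd a (fun q => φ q a) p)
    ∧ (∀ ρ : (Fin 4 → ℝ) → ℝ,
        ((∀ p ∈ U, ∀ b,
            (1 / 2) * ((∑ n, pd n (fun q => F q n b) p)
              - (∑ n, pd b (fun q => F q n n) p))
              = 2 * Real.pi * ρ p * t b)
          ↔ (∀ p ∈ U, ∑ a, pd a (fun q => φ q a) p = 4 * Real.pi * ρ p)))
    ∧ (∀ p, ∀ a b c, F p a b * t c - F p a c * t b = 0) := by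
  obtain rfl : F = fun p a b => φ p a * t b := funext fun p => funext₂ (hF p)
  have hdiff : ∀ p ∈ U, ∀ a, DifferentiableAt ℝ (fun q => φ q a) p := fun p hp a =>
    ((hφ a).differentiableOn one_ne_zero).differentiableAt (hU.mem_nhds hp)
  have contraction_eq : ∀ p ∈ U, ∀ b, _ :=
    fun p hp => contracted_antisymm_pd_eq_half_mul_divergence hU hp (hdiff p hp) hφt
  refine ⟨contraction_eq, fun ρ => forall₂_congr fun p hp => ?_, fun _ _ _ _ => by ring⟩
  rw [← forall_mul_left_eq_iff ht]
  refine forall_congr' fun b => ?_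
  rw [contraction_eq p hp b]
  constructor <;> intro h <;> linarith
end

section
/- Let t ∈ (ℝ⁴)* be a constant covector, x ∈ ℝ⁴ a constant vector with t_a x^a = 0, ψ : U → ℝ continuously differentiable, and φ : U → ℝ⁴ continuous on an open set U ⊆ ℝ⁴. Define F̌^a_b = φ^a t_b + x^a ∂_b ψ and the connection Γ̌^a_{bc} = −x^a (∂_b ψ) t_c. Let γ : I → U be a twice differentiable curve (I ⊆ ℝ an interval) whose tangent is unit timelike: t_a γ̇^a(s) = 1 for all s ∈ I. Then γ satisfies the Newtonian equation of motion γ̈^a(s) = −φ^a(γ(s)) for all s ∈ I if and only if γ satisfies the torsional force equation γ̈^a(s) + Γ̌^a_{bc}(γ(s)) γ̇^b(s) γ̇^c(s) = −F̌^a_b(γ(s)) γ̇^b(s) for all s ∈ I. -/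
section Contraction

variable {ι R : Type*} [Fintype ι] [CommRing R] (t v g : ι → R)

theorem sum_sum_neg_mul_mul_of_sum_mul_eq_one (y : R) (htv : ∑ c, t c * v c = 1) :
    ∑ b, ∑ c, -(y * g b * t c) * v b * v c = -(y * ∑ b, g b * v b) := by
  calc ∑ b, ∑ c, -(y * g b * t c) * v b * v c
      = ∑ b, -(y * (g b * v b)) * ∑ c, t c * v c := by
        simp_rw [Finset.mul_sum]
        exact Finset.sum_congr rfl fun b _ => Finset.sum_congr rfl fun c _ => by ring
    _ = -(y * ∑ b, g b * v b) := by
        simp only [htv, mul_one, Finset.mul_sum, Finset.sum_neg_distrib]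

theorem sum_add_mul_mul_of_sum_mul_eq_one (p y : R) (htv : ∑ c, t c * v c = 1) :
    ∑ b, (p * t b + y * g b) * v b = p + y * ∑ b, g b * v b := by
  calc ∑ b, (p * t b + y * g b) * v b
      = p * ∑ b, t b * v b + y * ∑ b, g b * v b := by
        simp only [Finset.mul_sum, ← Finset.sum_add_distrib]
        exact Finset.sum_congr rfl fun b _ => by ring
    _ = p + y * ∑ b, g b * v b := by rw [htv, mul_one]

theorem torsional_eq_iff_newtonian_eq (acc p y : R) (htv : ∑ c, t c * v c = 1) :
    acc + ∑ b, ∑ c, -(y * g b * t c) * v b * v c = -∑ b, (p * t b + y * g b) * v b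
      ↔ acc = -p := by
  rw [sum_sum_neg_mul_mul_of_sum_mul_eq_one t v g y htv,
    sum_add_mul_mul_of_sum_mul_eq_one t v g p y htv]
  constructor <;> intro h <;> linear_combination h

end Contraction

theorem newtonian_iff_torsional_equation_of_motion_general
    (t : Fin 4 → ℝ) (x : Fin 4 → ℝ)
    (ψ : (Fin 4 → ℝ) → ℝ)
    (φ : (Fin 4 → ℝ) → Fin 4 → ℝ)
    (F : (Fin 4 → ℝ) → Fin 4 → Fin 4 → ℝ)
    (hF : ∀ p a b, F p a b = φ p a * t b + x a * pd b ψ p)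
    (Γ : (Fin 4 → ℝ) → Fin 4 → Fin 4 → Fin 4 → ℝ)
    (hΓ : ∀ p a b c, Γ p a b c = -(x a * pd b ψ p * t c))
    (I : Set ℝ)
    (γ : ℝ → Fin 4 → ℝ)
    (hunit : ∀ s ∈ I, ∑ a, t a * deriv (fun u => γ u a) s = 1) :
    (∀ s ∈ I, ∀ a, deriv (deriv fun u => γ u a) s = -φ (γ s) a)
    ↔ (∀ s ∈ I, ∀ a,
        deriv (deriv fun u => γ u a) s
          + ∑ b, ∑ c, Γ (γ s) a b c
              * deriv (fun u => γ u b) s * deriv (fun u => γ u c) s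
          = -∑ b, F (γ s) a b * deriv (fun u => γ u b) s) := by
  simp only [hΓ, hF]
  refine forall₂_congr fun s hs => forall_congr' fun a => ?_
  exact (torsional_eq_iff_newtonian_eq t (fun b => deriv (fun u => γ u b) s)
    (fun b => pd b ψ (γ s)) _ _ _ (hunit s hs)).symm

/-- with `F̌^a_b = φ^a t_b + x^a ∂_b ψ` and `Γ̌^a_{bc} = −x^a (∂_b ψ) t_c`,
a twice differentiable unit-timelike curve `γ` (`t_a γ̇^a = 1` on the interval `I`)
satisfies the Newtonian equation of motion `γ̈^a = −φ^a(γ)` iff it satisfies the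
torsional force equation `γ̈^a + Γ̌^a_{bc}(γ) γ̇^b γ̇^c = −F̌^a_b(γ) γ̇^b`. -/
theorem newtonian_iff_torsional_equation_of_motion
    (U : Set (Fin 4 → ℝ)) (hU : IsOpen U)
    (t : Fin 4 → ℝ) (x : Fin 4 → ℝ)
    (htx : ∑ a, t a * x a = 0)
    (ψ : (Fin 4 → ℝ) → ℝ) (hψ : ContDiffOn ℝ 1 ψ U)
    (φ : (Fin 4 → ℝ) → Fin 4 → ℝ)
    (hφ : ∀ a, ContinuousOn (fun p => φ p a) U)
    (F : (Fin 4 → ℝ) → Fin 4 → Fin 4 → ℝ)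
    (hF : ∀ p a b, F p a b = φ p a * t b + x a * pd b ψ p)
    (Γ : (Fin 4 → ℝ) → Fin 4 → Fin 4 → Fin 4 → ℝ)
    (hΓ : ∀ p a b c, Γ p a b c = -(x a * pd b ψ p * t c))
    (I : Set ℝ) (hI : I.OrdConnected)
    (γ : ℝ → Fin 4 → ℝ)
    (hγU : ∀ s ∈ I, γ s ∈ U)
    (hγdiff : ∀ a, ∀ s ∈ I, DifferentiableAt ℝ (fun u => γ u a) s ∧
        DifferentiableAt ℝ (deriv fun u => γ u a) s)
    (hunit : ∀ s ∈ I, ∑ a, t a * deriv (fun u => γ u a) s = 1) :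
    (∀ s ∈ I, ∀ a, deriv (deriv fun u => γ u a) s = -φ (γ s) a)
    ↔ (∀ s ∈ I, ∀ a,
        deriv (deriv fun u => γ u a) s
          + ∑ b, ∑ c, Γ (γ s) a b c
              * deriv (fun u => γ u b) s * deriv (fun u => γ u c) s
          = -∑ b, F (γ s) a b * deriv (fun u => γ u b) s) :=
  newtonian_iff_torsional_equation_of_motion_general t x ψ φ F hF Γ hΓ I γ hunit
end
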